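/- For every R ⊆ C(X_G, ℂ), the set Ω_R is a closed, hence compact, subset of X_G. -/

import Mathlib

/-!
`Ω_R` is the intersection, over `f ∈ R` and `t ∈ G`, of the sets where `ξ ∈ X_t` implies
`f(t⁻¹ξ) = 0`. Each is closed: `X_t` is open, `ξ ↦ t⁻¹ξ` is continuous on it, and a condition
imposed only on an open set fails on an open set. Compactness follows because `X_G`, cut out by
conditions on at most two coordinates each, is closed in the compact space `{0,1}^(G × I)`.
-/

/-- The space `X_G`: subsets `ξ` of `G × I` (with `I = J ⊔ {0}` realized as `Option J`,
`none` playing the role of `0`), identified with points of `{0,1}^(G × I)` with the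
product topology, such that `(e, 0) ∈ ξ` and `(r, i) ∈ ξ` implies `(r, 0) ∈ ξ`. -/
def XG (G : Type*) [Group G] (J : Type*) : Set ((G × Option J) → Bool) :=
  {ξ | ξ (1, none) = true ∧ ∀ (r : G) (i : Option J), ξ (r, i) = true → ξ (r, none) = true}

/-- The translate `tξ = { (t r, i) : (r, i) ∈ ξ }`: `(g, i) ∈ tξ` iff `(t⁻¹ g, i) ∈ ξ`. -/
def act {G : Type*} [Group G] {J : Type*} (t : G) (ξ : (G × Option J) → Bool) :
    (G × Option J) → Bool :=
  fun x => ξ (t⁻¹ * x.1, x.2)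

/-- If `ξ ∈ X_G` and `(t, 0) ∈ ξ`, then `t⁻¹ξ ∈ X_G`. -/
theorem act_inv_mem {G : Type*} [Group G] {J : Type*} {t : G}
    {ξ : (G × Option J) → Bool} (hξ : ξ ∈ XG G J) (h : ξ (t, none) = true) :
    act t⁻¹ ξ ∈ XG G J := by
  constructor
  · show ξ (t⁻¹⁻¹ * 1, none) = true
    rw [inv_inv, mul_one]; exact h
  · intro r i hri
    exact hξ.2 _ _ hri

/-- Given `R ⊆ C(X_G, ℂ)`, the set
`Ω_R = { ξ ∈ X_G : f(t⁻¹ξ) = 0 for every f ∈ R and every t ∈ G with (t,0) ∈ ξ }`. -/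
def OmegaR {G : Type*} [Group G] {J : Type*} (R : Set C(XG G J, ℂ)) :
    Set (XG G J) :=
  {ξ | ∀ f ∈ R, ∀ t : G, ∀ h : (ξ : (G × Option J) → Bool) (t, none) = true,
    f ⟨act t⁻¹ (ξ : (G × Option J) → Bool), act_inv_mem ξ.2 h⟩ = 0}

theorem IsOpen.isClosed_setOf_forall_mem {X : Type*} [TopologicalSpace X] {U : Set X}
    (hU : IsOpen U) {P : ∀ x ∈ U, Prop} (hP : IsClosed {y : U | P y y.2}) :
    IsClosed {x | ∀ h : x ∈ U, P x h} := by
  have hcompl : {x | ∀ h : x ∈ U, P x h}ᶜ = Subtype.val '' {y : U | P y y.2}ᶜ := by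
    ext x
    simp only [Set.mem_compl_iff, Set.mem_ofPred_eq, not_forall, Set.mem_image]
    exact ⟨fun ⟨h, hx⟩ => ⟨⟨x, h⟩, hx, rfl⟩, fun ⟨y, hy, hyx⟩ => hyx ▸ ⟨y.2, hy⟩⟩
  rw [← isOpen_compl_iff, hcompl]
  exact hU.isOpenMap_subtype_val _ hP.isOpen_compl

section

variable {G : Type*} [Group G] {J : Type*}

theorem continuous_act (t : G) : Continuous (act (J := J) t) :=
  continuous_pi fun _ => continuous_apply _

theorem isClosed_XG : IsClosed (XG G J) := by
  have hXG : XG G J = {ξ | ξ (1, none) = true} ∩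
      ⋂ (r : G) (i : Option J), {ξ | ξ (r, i) = true → ξ (r, none) = true} := by
    ext ξ
    simp [XG]
  have hcoord (x : G × Option J) : Continuous fun ξ : (G × Option J) → Bool => ξ x :=
    continuous_apply x
  rw [hXG]
  refine (isClosed_discrete {b : Bool | b = true}).preimage (hcoord (1, none)) |>.inter <|
    isClosed_iInter fun r => isClosed_iInter fun i => ?_
  exact (isClosed_discrete {p : Bool × Bool | p.1 = true → p.2 = true}).preimage
    ((hcoord (r, i)).prodMk (hcoord (r, none)))

instance XG.compactSpace : CompactSpace (XG G J) :=
  isCompact_iff_compactSpace.mp isClosed_XG.isCompact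

theorem isOpen_setOf_apply_eq_true (t : G) :
    IsOpen {ξ : XG G J | (ξ : (G × Option J) → Bool) (t, none) = true} :=
  (isOpen_discrete {b : Bool | b = true}).preimage
    ((continuous_apply (t, none)).comp continuous_subtype_val :
      Continuous fun ξ : XG G J => (ξ : (G × Option J) → Bool) (t, none))

theorem isClosed_setOf_apply_act_inv_eq_zero (f : C(XG G J, ℂ)) (t : G) :
    IsClosed {ξ : XG G J | ∀ h : (ξ : (G × Option J) → Bool) (t, none) = true,
      f ⟨act t⁻¹ (ξ : (G × Option J) → Bool), act_inv_mem ξ.2 h⟩ = 0} := by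
  refine (isOpen_setOf_apply_eq_true t).isClosed_setOf_forall_mem
    (P := fun (ξ : XG G J) (h : (ξ : (G × Option J) → Bool) (t, none) = true) =>
      f ⟨act t⁻¹ (ξ : (G × Option J) → Bool), act_inv_mem ξ.2 h⟩ = 0) ?_
  refine isClosed_eq (f.continuous.comp (Continuous.subtype_mk ?_ _)) continuous_const
  exact (continuous_act t⁻¹).comp (continuous_subtype_val.comp continuous_subtype_val)

end

/-- For every `R ⊆ C(X_G, ℂ)`, the set `Ω_R` is a closed, hence compact, subset
of `X_G`. -/
theorem OmegaR_isClosed_isCompact (G : Type*) [Group G] (J : Type*)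
    (R : Set C(XG G J, ℂ)) :
    IsClosed (OmegaR R) ∧ IsCompact (OmegaR R) := by
  have hOmega : OmegaR R = ⋂ f ∈ R, ⋂ t : G, {ξ : XG G J |
      ∀ h : (ξ : (G × Option J) → Bool) (t, none) = true,
        f ⟨act t⁻¹ (ξ : (G × Option J) → Bool), act_inv_mem ξ.2 h⟩ = 0} := by
    ext ξ
    simp [OmegaR]
  have hclosed : IsClosed (OmegaR R) := by
    rw [hOmega]
    exact isClosed_biInter fun f _ => isClosed_iInter (isClosed_setOf_apply_act_inv_eq_zero f)
  exact ⟨hclosed, hclosed.isCompact⟩
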